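/- arXiv:2503.09948 — 4 statements merged into one kernel-verified Lean document; each statement's English description precedes it below -/
import Mathlib

section
/- For any sufficiently small ε > 0 and exponents 0 < b < 2 < a, the signed measure μ = δ_ε − 2δ_0 + δ_{−ε} on ℝ has negative interaction energy for the potential W_{a,b}(x) = |x|^a/a − |x|^b/b; precisely, E[μ] = −((2^b−4)/b)ε^b + ((2^a−4)/a)ε^a < 0 for all small ε > 0. -/
open Finset

noncomputable section

/-- The power-law potential `W_{a,b}(x) = |x|^a/a - |x|^b/b` on `ℝ`. -/
def Wab (a b x : ℝ) : ℝ := |x| ^ a / a - |x| ^ b / b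

/-- The interaction energy `E[μ] = (1/2)∑ᵢ∑ⱼ wᵢ wⱼ W(pᵢ - pⱼ)` of a linear
combination of Dirac masses `μ = ∑ᵢ wᵢ δ_{pᵢ}`. -/
def diracEnergy {n : ℕ} (W : ℝ → ℝ) (w p : Fin n → ℝ) : ℝ :=
  (1 / 2) * ∑ i, ∑ j, w i * w j * W (p i - p j)

lemma energy_formula' (a b ε : ℝ) (ha : 0 < a) (hb : 0 < b) (hε : 0 < ε) :
    diracEnergy (Wab a b) ![1, -2, 1] ![ε, 0, -ε]
      = -((2 ^ b - 4) / b) * ε ^ b + ((2 ^ a - 4) / a) * ε ^ a := by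
  have h0 : Wab a b 0 = 0 := by
    simp [Wab, Real.zero_rpow ha.ne', Real.zero_rpow hb.ne']
  have h2 : |(2:ℝ) * ε| = 2 * ε := abs_of_pos (by linarith)
  have hεa : |ε| = ε := abs_of_pos hε
  simp only [diracEnergy, Fin.sum_univ_three, Matrix.cons_val_zero, Matrix.cons_val_one,
    Matrix.head_cons, Matrix.cons_val_two, Matrix.tail_cons]
  have e1 : ε - 0 = ε := by ring
  have e2 : (0:ℝ) - ε = -ε := by ring
  have e3 : ε - -ε = 2 * ε := by ring
  have e4 : -ε - ε = -(2*ε) := by ring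
  have e5 : -ε - 0 = -ε := by ring
  have e6 : (0:ℝ) - -ε = ε := by ring
  rw [e1, e2, e3, e4, e5, e6, sub_self, sub_self, sub_self]
  have wneg : ∀ x : ℝ, Wab a b (-x) = Wab a b x := fun x => by simp [Wab]
  simp only [wneg, h0]
  have w1 : Wab a b ε = ε ^ a / a - ε ^ b / b := by simp [Wab, hεa]
  have w2 : Wab a b (2*ε) = 2^a * ε ^ a / a - 2^b * ε ^ b / b := by
    simp [Wab, h2, Real.mul_rpow (by norm_num : (0:ℝ) ≤ 2) hε.le]
  rw [w1, w2]
  ring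

/-- For `2 < b < a`, the signed measure `μ = δ_ε - 2δ_0 + δ_{-ε}` has
interaction energy `E[μ] = -((2^b - 4)/b) ε^b + ((2^a - 4)/a) ε^a`, which is negative
for all sufficiently small `ε > 0`. -/
theorem dirac_triple_negative_energy (a b : ℝ) (hb : 2 < b) (hba : b < a) :
    ∃ ε₀ > 0, ∀ ε : ℝ, 0 < ε → ε < ε₀ →
      diracEnergy (Wab a b) ![1, -2, 1] ![ε, 0, -ε]
          = -((2 ^ b - 4) / b) * ε ^ b + ((2 ^ a - 4) / a) * ε ^ a ∧
        diracEnergy (Wab a b) ![1, -2, 1] ![ε, 0, -ε] < 0 := by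
  have ha0 : (0:ℝ) < a := by linarith
  have hb0 : (0:ℝ) < b := by linarith
  have hCb : (0:ℝ) < (2 ^ b - 4) / b := by
    have : (4:ℝ) < 2 ^ b := by
      calc (4:ℝ) = 2 ^ (2:ℝ) := by
            rw [show (2:ℝ) = ((2:ℕ):ℝ) by norm_num, Real.rpow_natCast]; norm_num
        _ < 2 ^ b := Real.rpow_lt_rpow_left_iff (by norm_num) |>.mpr hb
    exact div_pos (by linarith) hb0
  have hCa : (0:ℝ) < (2 ^ a - 4) / a := by
    have : (4:ℝ) < 2 ^ a := by
      calc (4:ℝ) = 2 ^ (2:ℝ) := by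
            rw [show (2:ℝ) = ((2:ℕ):ℝ) by norm_num, Real.rpow_natCast]; norm_num
        _ < 2 ^ a := Real.rpow_lt_rpow_left_iff (by norm_num) |>.mpr (by linarith)
    exact div_pos (by linarith) ha0
  set Cb := (2 ^ b - 4) / b with hCbdef
  set Ca := (2 ^ a - 4) / a with hCadef
  have hab : 0 < a - b := by linarith
  refine ⟨(Cb / Ca) ^ (1 / (a - b)), Real.rpow_pos_of_pos (div_pos hCb hCa) _, fun ε hε hε₀ => ?_⟩
  refine ⟨energy_formula' a b ε ha0 hb0 hε, ?_⟩
  rw [energy_formula' a b ε ha0 hb0 hε]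
  have hεab : ε ^ (a - b) < Cb / Ca := by
    calc ε ^ (a - b) < ((Cb / Ca) ^ (1 / (a - b))) ^ (a - b) :=
          Real.rpow_lt_rpow hε.le hε₀ hab
      _ = Cb / Ca := by
          rw [← Real.rpow_mul (div_pos hCb hCa).le, one_div_mul_cancel hab.ne',
            Real.rpow_one]
  have hεa : ε ^ a = ε ^ b * ε ^ (a - b) := by
    rw [← Real.rpow_add hε]; ring_nf
  have hεb : (0:ℝ) < ε ^ b := Real.rpow_pos_of_pos hε b
  have : Ca * ε ^ (a - b) < Cb := by
    rw [lt_div_iff₀ hCa] at hεab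
    linarith [hεab]
  nlinarith [this, hεb]


end
end

section
/- The function f(a) = −15 + 6·2^a − 3^a satisfies f(4) = 0 and f(a) < 0 for all a > 4. -/
/-! Write `a = 4 + t` with `t > 0`, so that `f(4 + t) = 96·2^t - 81·3^t - 15`. The tangent-line
bound `1 + s ≤ exp s` gives `3^t ≥ 2^t (1 + t log (3/2))` and `2^t (1 - t log 2) ≤ 1`, whence
`f(4 + t) ≤ 2^t · t · (96 log 2 - 81 log 3)`, which is negative because `2^32 < 3^27`. -/

open Real

lemma rpow_mul_one_add_mul_log_div_le {a b : ℝ} (ha : 0 < a) (hb : 0 < b) (t : ℝ) :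
    a ^ t * (1 + t * log (b / a)) ≤ b ^ t := by
  have hexp : 1 + t * log (b / a) ≤ (b / a) ^ t := by
    rw [rpow_def_of_pos (div_pos hb ha), mul_comm, add_comm]
    exact add_one_le_exp _
  calc a ^ t * (1 + t * log (b / a)) ≤ a ^ t * (b / a) ^ t := by gcongr
    _ = b ^ t := by
      rw [div_rpow hb.le ha.le, mul_div_cancel₀ _ (rpow_pos_of_pos ha t).ne']

lemma thirtytwo_mul_log_two_lt : 32 * log 2 < 27 * log 3 := by
  have h : log ((2 : ℝ) ^ 32) < log ((3 : ℝ) ^ 27) := log_lt_log (by positivity) (by norm_num)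
  rwa [log_pow, log_pow] at h

/-- The function `f(a) = -15 + 6·2^a - 3^a` (with real exponentials `2^a = exp(a ln 2)`,
`3^a = exp(a ln 3)`) satisfies `f(4) = 0` and `f(a) < 0` for all `a > 4`. -/
theorem f_four_zero_and_neg :
    (-15 + 6 * (2:ℝ) ^ (4:ℝ) - (3:ℝ) ^ (4:ℝ) = 0) ∧
      ∀ a : ℝ, 4 < a → -15 + 6 * (2:ℝ) ^ a - (3:ℝ) ^ a < 0 := by
  refine ⟨by norm_num, fun a ha => ?_⟩
  obtain ⟨t, ht, rfl⟩ : ∃ t, 0 < t ∧ a = 4 + t := ⟨a - 4, by linarith, by ring⟩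
  have h2t : 0 < (2 : ℝ) ^ t := by positivity
  have h3 : (2 : ℝ) ^ t * (1 + t * log (3 / 2)) ≤ 3 ^ t :=
    rpow_mul_one_add_mul_log_div_le two_pos three_pos t
  have h1 : (2 : ℝ) ^ t * (1 + t * log (1 / 2)) ≤ 1 := by
    simpa using rpow_mul_one_add_mul_log_div_le two_pos one_pos t
  rw [log_div three_ne_zero two_ne_zero] at h3
  rw [one_div, log_inv] at h1
  have hf : -15 + 6 * (2 : ℝ) ^ (4 + t) - 3 ^ (4 + t) = 96 * 2 ^ t - 81 * 3 ^ t - 15 := by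
    rw [rpow_add two_pos, rpow_add three_pos]
    norm_num
    ring
  rw [hf]
  nlinarith [mul_pos (mul_pos h2t ht) (by linarith [thirtytwo_mul_log_two_lt] :
    0 < 81 * log 3 - 96 * log 2)]
end

section
/- Fix b > −d with b ≠ 0 and a_0 > max{b,0}. There exists r_* ≥ 2 depending only on b and a_0 such that for all a ≥ a_0 and all r ≥ r_*, the inequality min_{t ≥ r} (t^a/a − t^b/b) ≥ r^a/(2a) holds. -/
open Real

/-!
Since `r ^ a ≤ t ^ a`, it suffices that `t ^ b / b ≤ t ^ a / (2 * a)`, which is trivial for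
`b ≤ 0`. For `b > 0` it reads `2 a / b ≤ t ^ (a - b)`; since `(a - b) log t ≤ t ^ (a - b)`,
it suffices that `log t ≥ 2 a / (b (a - b))`, and `a / (a - b)` is decreasing in `a > b`, so
the threshold `log t ≥ 2 a₀ / (b (a₀ - b))` works uniformly in `a ≥ a₀`.
-/

lemma div_sub_le_div_sub_of_le {a a₀ b : ℝ} (hb : 0 ≤ b) (hba₀ : b < a₀)
    (ha : a₀ ≤ a) : a / (a - b) ≤ a₀ / (a₀ - b) := by
  rw [div_le_div_iff₀ (by linarith) (by linarith)]
  nlinarith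

lemma div_le_rpow_sub_of_exp_le {a a₀ b t : ℝ} (hb : 0 < b) (hba₀ : b < a₀)
    (ha : a₀ ≤ a) (ht : exp (2 * a₀ / (b * (a₀ - b))) ≤ t) :
    2 * a / b ≤ t ^ (a - b) := by
  have hab : 0 < a - b := by linarith
  have ht0 : 0 < t := (exp_pos _).trans_le ht
  have hlog : 2 * a / (b * (a - b)) ≤ log t :=
    calc 2 * a / (b * (a - b)) = 2 / b * (a / (a - b)) := by field_simp
      _ ≤ 2 / b * (a₀ / (a₀ - b)) := by
        gcongr 2 / b * ?_
        exact div_sub_le_div_sub_of_le hb.le hba₀ ha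
      _ = 2 * a₀ / (b * (a₀ - b)) := by field_simp
      _ ≤ log t := (le_log_iff_exp_le ht0).mpr ht
  calc 2 * a / b = (a - b) * (2 * a / (b * (a - b))) := by field_simp
    _ ≤ (a - b) * log t := by gcongr
    _ ≤ t ^ (a - b) := (le_div_iff₀' hab).mp (log_le_rpow_div ht0.le hab)

lemma rpow_div_le_rpow_div_two_mul {a b t : ℝ} (ha : 0 < a) (hb : 0 < b) (ht : 0 < t)
    (h : 2 * a / b ≤ t ^ (a - b)) :
    t ^ b / b ≤ t ^ a / (2 * a) := by
  rw [div_le_div_iff₀ hb (by positivity)]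
  calc t ^ b * (2 * a) = 2 * a / b * t ^ b * b := by field_simp
    _ ≤ t ^ (a - b) * t ^ b * b := by gcongr
    _ = t ^ a * b := by rw [← rpow_add ht, sub_add_cancel]

lemma rpow_div_two_mul_le_sub {a b r t : ℝ} (ha : 0 < a) (hr : 0 ≤ r) (hrt : r ≤ t)
    (h : t ^ b / b ≤ t ^ a / (2 * a)) :
    r ^ a / (2 * a) ≤ t ^ a / a - t ^ b / b := by
  have hra : r ^ a / (2 * a) ≤ t ^ a / (2 * a) := by gcongr
  have hhalf : t ^ a / a - t ^ a / (2 * a) = t ^ a / (2 * a) := by field_simp; ring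
  linarith

theorem power_law_lower_bound_general (b : ℝ)
    (a₀ : ℝ) (ha₀ : max b 0 < a₀) :
    ∃ rstar : ℝ, 2 ≤ rstar ∧
      ∀ a : ℝ, a₀ ≤ a → ∀ r : ℝ, rstar ≤ r → ∀ t : ℝ, r ≤ t →
        r ^ a / (2 * a) ≤ t ^ a / a - t ^ b / b := by
  obtain ⟨hba₀, ha₀0⟩ := max_lt_iff.mp ha₀
  refine ⟨max 2 (exp (2 * a₀ / (b * (a₀ - b)))), le_max_left _ _, fun a ha r hr t hrt => ?_⟩
  have ha0 : 0 < a := ha₀0.trans_le ha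
  have hr0 : 0 ≤ r := by linarith [(le_max_left _ _).trans hr]
  have ht0 : 0 < t := by linarith [(le_max_left _ _).trans hr]
  refine rpow_div_two_mul_le_sub ha0 hr0 hrt ?_
  rcases le_or_gt b 0 with hb | hb
  · exact (div_nonpos_of_nonneg_of_nonpos (rpow_nonneg ht0.le b) hb).trans (by positivity)
  · exact rpow_div_le_rpow_div_two_mul ha0 hb ht0
      (div_le_rpow_sub_of_exp_le hb hba₀ ha (((le_max_right _ _).trans hr).trans hrt))

/-- For fixed `b > -d` with `b ≠ 0` and `a₀ > max{b,0}`, there exists `r_* ≥ 2`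
(depending only on `b` and `a₀`) such that for all `a ≥ a₀` and all `r ≥ r_*`,
`t^a/a - t^b/b ≥ r^a/(2a)` for every `t ≥ r`. -/
theorem power_law_lower_bound (d : ℕ) (hd : 0 < d) (b : ℝ) (hb : -(d:ℝ) < b) (hb0 : b ≠ 0)
    (a₀ : ℝ) (ha₀ : max b 0 < a₀) :
    ∃ rstar : ℝ, 2 ≤ rstar ∧
      ∀ a : ℝ, a₀ ≤ a → ∀ r : ℝ, rstar ≤ r → ∀ t : ℝ, r ≤ t →
        r ^ a / (2 * a) ≤ t ^ a / a - t ^ b / b :=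
  power_law_lower_bound_general b a₀ ha₀
end

section
/- The interaction energy for the potential W(x) = |x|⁴ on ℝ^d is nonnegative on mean-zero, first-moment-zero signed measures: if μ is a compactly supported finite signed measure with μ(ℝ^d) = 0 and ∫ x dμ(x) = 0, then ∬ |x − y|⁴ dμ(y) dμ(x) ≥ 0. -/
open MeasureTheory Set
open scoped RealInnerProductSpace TensorProduct

/-!
Expanding `‖x - y‖⁴ = (‖x‖² - 2⟪x, y⟫ + ‖y‖²)²` and writing `⟪x, y⟫² = ⟪x ⊗ x, y ⊗ y⟫` turns
the kernel into a sum of products `⟪f x, g y⟫` of moment functions. Integrated against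
`(μ⁺ - μ⁻) ⊗ (μ⁺ - μ⁻)`, every term involving the total mass or the first moment of `μ` cancels,
and what remains is `2 (∫ ‖x‖² dμ)² + 4 ‖∫ x ⊗ x dμ‖² ≥ 0`.
-/

theorem norm_sub_pow_four_eq {E : Type*} [NormedAddCommGroup E] [InnerProductSpace ℝ E]
    (x y : E) :
    ‖x - y‖ ^ 4 = ‖x‖ ^ 4 + ‖y‖ ^ 4 + 2 * (‖x‖ ^ 2 * ‖y‖ ^ 2) + 4 * ⟪x ⊗ₜ[ℝ] x, y ⊗ₜ[ℝ] y⟫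
      - 4 * ⟪‖x‖ ^ 2 • x, y⟫ - 4 * ⟪x, ‖y‖ ^ 2 • y⟫ := by
  rw [TensorProduct.inner_tmul, real_inner_smul_left, real_inner_smul_right,
    show ‖x - y‖ ^ 4 = (‖x - y‖ ^ 2) ^ 2 by ring, norm_sub_sq_real]
  ring

theorem continuous_tmul_self {E : Type*} [NormedAddCommGroup E] [InnerProductSpace ℝ E] :
    Continuous fun x : E => x ⊗ₜ[ℝ] x :=
  TensorProduct.continuous_tmul.comp (continuous_id.prodMk continuous_id)

theorem Continuous.integrable_of_measure_compl_eq_zero {X F : Type*} [TopologicalSpace X]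
    [T2Space X] [MeasurableSpace X] [OpensMeasurableSpace X] [NormedAddCommGroup F]
    {μ : Measure X} [IsFiniteMeasure μ] {K : Set X} (hK : IsCompact K) (hμK : μ Kᶜ = 0)
    {f : X → F} (hf : Continuous f) : Integrable f μ := by
  rw [← Measure.restrict_eq_self_of_ae_mem (mem_ae_iff.2 hμK)]
  exact hf.continuousOn.integrableOn_compact hK

theorem integral_inner_prod {X Y F : Type*} [MeasurableSpace X] [MeasurableSpace Y]
    [NormedAddCommGroup F] [InnerProductSpace ℝ F] [CompleteSpace F]
    {α : Measure X} {β : Measure Y} [SFinite α] [SFinite β] {f : X → F} {g : Y → F}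
    (hf : Integrable f α) (hg : Integrable g β) :
    ∫ z, ⟪f z.1, g z.2⟫ ∂α.prod β = ⟪∫ x, f x ∂α, ∫ y, g y ∂β⟫ :=
  integral_prod_bilin (innerSL ℝ) hf hg

section

variable {E : Type*} [NormedAddCommGroup E] [InnerProductSpace ℝ E] [FiniteDimensional ℝ E]
  [MeasurableSpace E] [BorelSpace E] {K L : Set E} {α β : Measure E}
  [IsFiniteMeasure α] [IsFiniteMeasure β]

theorem integral_norm_sub_pow_four_prod (hK : IsCompact K) (hL : IsCompact L)
    (hα : α Kᶜ = 0) (hβ : β Lᶜ = 0) :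
    ∫ p, ‖p.1 - p.2‖ ^ 4 ∂α.prod β =
      β.real univ * ∫ x, ‖x‖ ^ 4 ∂α + α.real univ * ∫ y, ‖y‖ ^ 4 ∂β
      + 2 * ((∫ x, ‖x‖ ^ 2 ∂α) * ∫ y, ‖y‖ ^ 2 ∂β)
      + 4 * ⟪∫ x, x ⊗ₜ[ℝ] x ∂α, ∫ y, y ⊗ₜ[ℝ] y ∂β⟫
      - 4 * ⟪∫ x, ‖x‖ ^ 2 • x ∂α, ∫ y, y ∂β⟫
      - 4 * ⟪∫ x, x ∂α, ∫ y, ‖y‖ ^ 2 • y ∂β⟫ := by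
  have hαβ {f : E × E → ℝ} (hf : Continuous f) : Integrable f (α.prod β) :=
    hf.integrable_of_measure_compl_eq_zero (hK.prod hL) (Measure.measure_prod_compl_eq_zero hα hβ)
  have htensor : Continuous fun p : E × E => ⟪p.1 ⊗ₜ[ℝ] p.1, p.2 ⊗ₜ[ℝ] p.2⟫ :=
    (continuous_tmul_self.comp continuous_fst).inner (continuous_tmul_self.comp continuous_snd)
  have hcube : Continuous fun x : E => ‖x‖ ^ 2 • x := by fun_prop
  have hid : Continuous fun x : E => x := continuous_id
  simp_rw [norm_sub_pow_four_eq]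
  rw [integral_sub (hαβ (by fun_prop)) (hαβ (by fun_prop)),
    integral_sub (hαβ (by fun_prop)) (hαβ (by fun_prop)),
    integral_add (hαβ (by fun_prop)) (hαβ (by fun_prop)),
    integral_add (hαβ (by fun_prop)) (hαβ (by fun_prop)),
    integral_add (hαβ (by fun_prop)) (hαβ (by fun_prop)),
    integral_const_mul, integral_const_mul, integral_const_mul, integral_const_mul,
    integral_fun_fst (fun x => ‖x‖ ^ 4), integral_fun_snd (fun y => ‖y‖ ^ 4),
    integral_prod_mul (fun x => ‖x‖ ^ 2) (fun y => ‖y‖ ^ 2),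
    integral_inner_prod (continuous_tmul_self.integrable_of_measure_compl_eq_zero hK hα)
      (continuous_tmul_self.integrable_of_measure_compl_eq_zero hL hβ),
    integral_inner_prod (hcube.integrable_of_measure_compl_eq_zero hK hα)
      (hid.integrable_of_measure_compl_eq_zero hL hβ),
    integral_inner_prod (hid.integrable_of_measure_compl_eq_zero hK hα)
      (hcube.integrable_of_measure_compl_eq_zero hL hβ)]
  simp only [smul_eq_mul]

theorem quartic_energy_eq_of_moments_eq (hK : IsCompact K) (hL : IsCompact L)
    (hα : α Kᶜ = 0) (hβ : β Lᶜ = 0) (hmass : α.real univ = β.real univ)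
    (hmoment : ∫ x, x ∂α = ∫ x, x ∂β) :
    ∫ p, ‖p.1 - p.2‖ ^ 4 ∂α.prod α + ∫ p, ‖p.1 - p.2‖ ^ 4 ∂β.prod β
        - 2 * ∫ p, ‖p.1 - p.2‖ ^ 4 ∂α.prod β =
      2 * (∫ x, ‖x‖ ^ 2 ∂α - ∫ x, ‖x‖ ^ 2 ∂β) ^ 2
        + 4 * ‖∫ x, x ⊗ₜ[ℝ] x ∂α - ∫ x, x ⊗ₜ[ℝ] x ∂β‖ ^ 2 := by
  rw [integral_norm_sub_pow_four_prod hK hK hα hα, integral_norm_sub_pow_four_prod hL hL hβ hβ,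
    integral_norm_sub_pow_four_prod hK hL hα hβ, hmass, hmoment, norm_sub_sq_real,
    ← real_inner_self_eq_norm_sq, ← real_inner_self_eq_norm_sq]
  simp only [real_inner_comm (∫ x, x ∂β)]
  ring

end

theorem quartic_energy_nonneg_general
    {d : ℕ} (μ : SignedMeasure (EuclideanSpace ℝ (Fin d)))
    (hcpt : ∃ K : Set (EuclideanSpace ℝ (Fin d)), IsCompact K ∧ μ.totalVariation Kᶜ = 0)
    (hmass : μ Set.univ = 0)
    (hmoment : (∫ x, x ∂μ.toJordanDecomposition.posPart)
      = (∫ x, x ∂μ.toJordanDecomposition.negPart)) :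
    0 ≤ (∫ p, ‖p.1 - p.2‖ ^ 4
          ∂((μ.toJordanDecomposition.posPart).prod (μ.toJordanDecomposition.posPart)))
        + (∫ p, ‖p.1 - p.2‖ ^ 4
          ∂((μ.toJordanDecomposition.negPart).prod (μ.toJordanDecomposition.negPart)))
        - 2 * ∫ p, ‖p.1 - p.2‖ ^ 4
          ∂((μ.toJordanDecomposition.posPart).prod (μ.toJordanDecomposition.negPart)) := by
  obtain ⟨K, hK, hμK⟩ := hcpt
  obtain ⟨hPK, hNK⟩ : μ.toJordanDecomposition.posPart Kᶜ = 0 ∧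
      μ.toJordanDecomposition.negPart Kᶜ = 0 :=
    add_eq_zero.mp hμK
  have hPN : μ.toJordanDecomposition.posPart.real univ =
      μ.toJordanDecomposition.negPart.real univ := by
    rw [μ.apply_eq_posPart_real_sub_negPart_real MeasurableSet.univ] at hmass
    linarith
  rw [quartic_energy_eq_of_moments_eq hK hK hPK hNK hPN hmoment]
  positivity

/-- The interaction energy of the potential `|x|⁴` is nonnegative on compactly supported
signed measures with vanishing total mass and first moment:
`∬ |x-y|⁴ dμ(y) dμ(x) ≥ 0`, the double integral being expanded through the Jordan
decomposition `μ = μ⁺ - μ⁻`. -/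
theorem quartic_energy_nonneg
    {d : ℕ} (hd : 0 < d) (μ : SignedMeasure (EuclideanSpace ℝ (Fin d)))
    (hcpt : ∃ K : Set (EuclideanSpace ℝ (Fin d)), IsCompact K ∧ μ.totalVariation Kᶜ = 0)
    (hmass : μ Set.univ = 0)
    (hmoment : (∫ x, x ∂μ.toJordanDecomposition.posPart)
      = (∫ x, x ∂μ.toJordanDecomposition.negPart)) :
    0 ≤ (∫ p, ‖p.1 - p.2‖ ^ 4
          ∂((μ.toJordanDecomposition.posPart).prod (μ.toJordanDecomposition.posPart)))
        + (∫ p, ‖p.1 - p.2‖ ^ 4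
          ∂((μ.toJordanDecomposition.negPart).prod (μ.toJordanDecomposition.negPart)))
        - 2 * ∫ p, ‖p.1 - p.2‖ ^ 4
          ∂((μ.toJordanDecomposition.posPart).prod (μ.toJordanDecomposition.negPart)) :=
  quartic_energy_nonneg_general μ hcpt hmass hmoment
end
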